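/- arXiv:2604.07337 — 2 statements merged into one kernel-verified Lean document; each statement's English description precedes it below -/
import Mathlib

section
/- Let v: ℝ³ → (0,1] be differentiable (vacancy), and along a ray r(t) = o + tw with v(o) = 1, suppose the transmittance T satisfies -d/dt log T(t) = |w·∇log v(r(t))| for all t. Then v(r(t)) ≥ T(t) for all t ≥ 0, i.e., transmittance is a lower bound on the vacancy. -/
open scoped RealInnerProductSpace

noncomputable section

theorem stmt10 (v : EuclideanSpace ℝ (Fin 3) → ℝ) (hv : Differentiable ℝ v)
    (hvpos : ∀ x, 0 < v x) (hvle : ∀ x, v x ≤ 1)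
    (o w : EuclideanSpace ℝ (Fin 3)) (hw : ‖w‖ = 1) (hvo : v o = 1)
    (T : ℝ → ℝ) (hTd : Differentiable ℝ T) (hTpos : ∀ t, 0 < T t) (hTle : ∀ t, T t ≤ 1)
    (hT0 : T 0 = 1)
    (hrel : ∀ t, 0 ≤ t → deriv (fun s => Real.log (T s)) t =
      -|⟪w, gradient (fun x => Real.log (v x)) (o + t • w)⟫|) :
    ∀ t, 0 ≤ t → T t ≤ v (o + t • w) := by
  set L : EuclideanSpace ℝ (Fin 3) → ℝ := fun x => Real.log (v x) with hLdef
  have hL : Differentiable ℝ L := hv.log fun x => (hvpos x).ne'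
  have hg : Differentiable ℝ (fun s => Real.log (T s)) :=
    hTd.log fun t => (hTpos t).ne'
  have hr : ∀ t : ℝ, HasDerivAt (fun s : ℝ => o + s • w) w t := by
    intro t
    simpa using ((hasDerivAt_id t).smul_const w).const_add o
  have hf : ∀ t : ℝ, HasDerivAt (fun s : ℝ => L (o + s • w))
      (fderiv ℝ L (o + t • w) w) t := fun t =>
    ((hL _).hasFDerivAt).comp_hasDerivAt t (hr t)
  have hinner : ∀ x, ⟪w, gradient L x⟫ = fderiv ℝ L x w := by
    intro x
    rw [real_inner_comm]
    simp [gradient, InnerProductSpace.toDual_symm_apply]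
  set F : ℝ → ℝ := fun t => L (o + t • w) - Real.log (T t) with hFdef
  have hFd : ∀ t : ℝ, HasDerivAt F
      (fderiv ℝ L (o + t • w) w - deriv (fun s => Real.log (T s)) t) t := fun t =>
    (hf t).sub ((hg t).hasDerivAt)
  have hFmono : MonotoneOn F (Set.Ici (0 : ℝ)) := by
    apply monotoneOn_of_deriv_nonneg (convex_Ici 0)
    · exact (Differentiable.continuous (fun t => ((hFd t).differentiableAt))).continuousOn
    · intro t ht
      exact ((hFd t).differentiableAt).differentiableWithinAt
    · intro t ht
      rw [interior_Ici] at ht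
      rw [(hFd t).deriv, hrel t ht.le, hinner]
      have := abs_nonneg (fderiv ℝ L (o + t • w) w)
      have := neg_abs_le (fderiv ℝ L (o + t • w) w)
      linarith
  intro t ht
  have h0 : F 0 ≤ F t := hFmono Set.self_mem_Ici ht ht
  have hF0 : F 0 = 0 := by
    simp [hFdef, hLdef, hT0, hvo]
  have hlog : Real.log (T t) ≤ Real.log (v (o + t • w)) := by
    have := h0
    rw [hF0] at this
    simp only [hFdef, hLdef, sub_nonneg] at this
    exact this
  exact (Real.log_le_log_iff (hTpos t) (hvpos _)).mp hlog
end
end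

section
/- Let n ∈ S² and let G(x) = α exp(-½(x-μ)ᵀΣ⁻¹(x-μ)). The vector field W(x) = 𝟙[nᵀ(x-μ) ≥ 0]·∇log(1-G(x)) satisfies ∫_{ℝ³} G(x)·W(x) dx = c·n' for some scalar c and vector n' collinear with Σ⁻¹-weighted direction of n; in particular, for an isotropic Gaussian (Σ = s²I), ∫_{ℝ³} G(x)W(x) dx is a nonzero scalar multiple of n. -/
/-!
Since `∇ log (1 - G) = G / ((1 - G) s²) • (x - μ)`, the integrand is `r(‖x - μ‖) • (x - μ)` on the
half-space `⟪n, x - μ⟫ ≥ 0` and zero off it, with a positive radial weight `r` of Gaussian decay.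
The reflection of space in the line `μ + ℝ n` preserves volume, the weight and the half-space, and
commutes with the field, so the integral is fixed by the reflection, i.e. it lies on `ℝ n`. Its
component along `n` is the integral of `r(‖x - μ‖) ⟪n, x - μ⟫` over the half-space, which is
positive.
-/

open scoped RealInnerProductSpace
open MeasureTheory Real

noncomputable section

variable {V : Type*} [NormedAddCommGroup V] [InnerProductSpace ℝ V]

theorem hasGradientAt_comp_norm_sub_sq [CompleteSpace V] {g : ℝ → ℝ} {d : ℝ} {μ x : V}
    (hg : HasDerivAt g d (‖x - μ‖ ^ 2)) :
    HasGradientAt (fun y => g (‖y - μ‖ ^ 2)) ((2 * d) • (x - μ)) x := by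
  rw [hasGradientAt_iff_hasFDerivAt]
  refine (hg.comp_hasFDerivAt x ((hasFDerivAt_id x).sub_const μ).norm_sq).congr_fderiv ?_
  ext v
  simp only [id_eq, map_sub, ContinuousLinearMap.comp_id, smul_apply, sub_apply, coe_innerSL_apply,
    nsmul_eq_mul, Nat.cast_ofNat, smul_eq_mul, map_smul, InnerProductSpace.toDual_apply_apply]
  ring

theorem integral_pos_of_pos_on_isOpen {X : Type*} [TopologicalSpace X] [MeasurableSpace X]
    {m : Measure X} [m.IsOpenPosMeasure] {f : X → ℝ} {U : Set X} (hf : 0 ≤ f)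
    (hfi : Integrable f m) (hU : IsOpen U) (hUne : U.Nonempty) (hfU : ∀ x ∈ U, 0 < f x) :
    0 < ∫ x, f x ∂m :=
  (integral_pos_iff_support_of_nonneg hf hfi).2 <|
    (hU.measure_pos m hUne).trans_le (measure_mono fun x hx => (hfU x hx).ne')

section FiniteDimensional

variable [FiniteDimensional ℝ V] [MeasurableSpace V] [BorelSpace V]

theorem integral_mem_of_reflection_comm (K : Submodule ℝ V) [K.HasOrthogonalProjection] (μ : V)
    {F : V → V} (hF : ∀ v, F (μ + K.reflection v) = K.reflection (F (μ + v))) :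
    ∫ x, F x ∈ K := by
  rw [← K.reflection_eq_self_iff]
  calc K.reflection (∫ x, F x) = K.reflection (∫ v, F (μ + v)) := by
        rw [integral_add_left_eq_self]
    _ = ∫ v, K.reflection (F (μ + v)) := (K.reflection.toLinearIsometry.integral_comp_comm _).symm
    _ = ∫ v, F (μ + K.reflection v) := by simp_rw [hF]
    _ = ∫ v, F (μ + v) := K.reflection.measurePreserving.integral_comp
          K.reflection.toHomeomorph.measurableEmbedding (fun v => F (μ + v))
    _ = ∫ x, F x := integral_add_left_eq_self ..

theorem integrable_exp_neg_mul_sq_norm {b : ℝ} (hb : 0 < b) :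
    Integrable fun v : V => exp (-b * ‖v‖ ^ 2) :=
  .of_integral_ne_zero (by rw [GaussianFourier.integral_rexp_neg_mul_sq_norm hb]; positivity)

theorem integrable_exp_neg_mul_sq_norm_mul_norm {b : ℝ} (hb : 0 < b) :
    Integrable fun v : V => exp (-b * ‖v‖ ^ 2) * ‖v‖ := by
  refine ((integrable_exp_neg_mul_sq_norm (V := V) (half_pos hb)).const_mul
    (exp (1 / (2 * b)))).mono' (by fun_prop) (.of_forall fun v => ?_)
  have hsq : ‖v‖ - b * ‖v‖ ^ 2 ≤ 1 / (2 * b) - b / 2 * ‖v‖ ^ 2 := by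
    have : 0 ≤ b / 2 * (‖v‖ - 1 / b) ^ 2 := by positivity
    field_simp at this ⊢
    nlinarith
  calc ‖exp (-b * ‖v‖ ^ 2) * ‖v‖‖ = exp (-b * ‖v‖ ^ 2) * ‖v‖ := by
        rw [norm_of_nonneg (by positivity)]
    _ ≤ exp (-b * ‖v‖ ^ 2) * exp ‖v‖ := by
        gcongr
        linarith [add_one_le_exp ‖v‖]
    _ ≤ exp (1 / (2 * b)) * exp (-(b / 2) * ‖v‖ ^ 2) := by
        rw [← exp_add, ← exp_add, exp_le_exp]
        linarith

end FiniteDimensional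

def halfSpaceField (μ n : V) (r : ℝ → ℝ) (x : V) : V :=
  (if 0 ≤ ⟪n, x - μ⟫ then r ‖x - μ‖ else 0) • (x - μ)

namespace halfSpaceField

variable [FiniteDimensional ℝ V] [MeasurableSpace V] [BorelSpace V] {μ n : V} {r : ℝ → ℝ}

theorem integrable (hr_meas : Measurable r) (hr_pos : ∀ t, 0 < r t)
    (hr_int : Integrable fun v : V => r ‖v‖ * ‖v‖) :
    Integrable (halfSpaceField μ n r) := by
  refine (hr_int.comp_sub_right μ).mono' ?_ (.of_forall fun x => ?_)
  · exact ((Measurable.ite (measurableSet_le measurable_const (by fun_prop)) (by fun_prop)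
      measurable_const).smul (by fun_prop)).aestronglyMeasurable
  · simp only [halfSpaceField, norm_smul]
    split_ifs
    · rw [norm_of_nonneg (hr_pos _).le]
    · simpa using mul_nonneg (hr_pos ‖x - μ‖).le (norm_nonneg _)

theorem integral_mem_span : ∫ x, halfSpaceField μ n r x ∈ ℝ ∙ n := by
  refine integral_mem_of_reflection_comm _ μ fun v => ?_
  have hR : ⟪n, (ℝ ∙ n).reflection v⟫ = ⟪n, v⟫ := by
    simpa [Submodule.reflection_mem_subspace_eq_self (Submodule.mem_span_singleton_self n)]
      using (ℝ ∙ n).reflection.inner_map_map n v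
  simp only [halfSpaceField, add_sub_cancel_left, LinearIsometryEquiv.norm_map, hR]
  split_ifs <;> simp

theorem inner_integral_pos (hn : n ≠ 0) (hr_pos : ∀ t, 0 < r t)
    (hint : Integrable (halfSpaceField μ n r)) :
    0 < ⟪n, ∫ x, halfSpaceField μ n r x⟫ := by
  rw [← integral_inner hint]
  refine integral_pos_of_pos_on_isOpen (U := {x | 0 < ⟪n, x - μ⟫}) (fun x => ?_)
    (hint.const_inner n) (isOpen_lt continuous_const (by fun_prop))
    ⟨μ + n, by simp [hn]⟩ (fun x (hx : 0 < ⟪n, x - μ⟫) => ?_)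
  · simp only [halfSpaceField, inner_smul_right]
    split_ifs with h
    · exact mul_nonneg (hr_pos _).le h
    · simp
  · simp only [halfSpaceField, inner_smul_right, if_pos hx.le]
    exact mul_pos (hr_pos _) hx

theorem exists_pos_smul_eq_integral (hn : n ≠ 0) (hr_meas : Measurable r)
    (hr_pos : ∀ t, 0 < r t) (hr_int : Integrable fun v : V => r ‖v‖ * ‖v‖) :
    ∃ c : ℝ, 0 < c ∧ ∫ x, halfSpaceField μ n r x = c • n := by
  obtain ⟨c, hc⟩ := (Submodule.mem_span_singleton (R := ℝ)).1 (integral_mem_span (μ := μ) (r := r))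
  refine ⟨c, ?_, hc.symm⟩
  have hpos := inner_integral_pos (μ := μ) hn hr_pos (integrable hr_meas hr_pos hr_int)
  rw [← hc, real_inner_smul_right, real_inner_self_eq_norm_sq] at hpos
  exact pos_of_mul_pos_left hpos (by positivity)

end halfSpaceField

def gaussianProfile (α s t : ℝ) : ℝ := α * exp (-t ^ 2 / (2 * s ^ 2))

section GaussianProfile

variable {α s : ℝ}

theorem exp_neg_sq_div_le_one (s t : ℝ) : exp (-t ^ 2 / (2 * s ^ 2)) ≤ 1 :=
  exp_le_one_iff.2 <| div_nonpos_of_nonpos_of_nonneg (neg_nonpos.2 (by positivity)) (by positivity)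

theorem gaussianProfile_pos (hα : 0 < α) (t : ℝ) : 0 < gaussianProfile α s t := by
  unfold gaussianProfile
  positivity

theorem gaussianProfile_le (hα : 0 ≤ α) (t : ℝ) : gaussianProfile α s t ≤ α :=
  mul_le_of_le_one_right hα (exp_neg_sq_div_le_one s t)

theorem gaussianProfile_lt_one (hα : α < 1) (t : ℝ) : gaussianProfile α s t < 1 := by
  unfold gaussianProfile
  nlinarith [exp_neg_sq_div_le_one s t, mul_pos (exp_pos (-t ^ 2 / (2 * s ^ 2))) (sub_pos.2 hα)]

theorem hasGradientAt_log_one_sub_gaussianProfile [CompleteSpace V] (hα : α < 1) (μ x : V) :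
    HasGradientAt (fun y => log (1 - gaussianProfile α s ‖y - μ‖))
      ((gaussianProfile α s ‖x - μ‖ / ((1 - gaussianProfile α s ‖x - μ‖) * s ^ 2)) • (x - μ)) x := by
  have hd := ((((hasDerivAt_neg (‖x - μ‖ ^ 2)).div_const (2 * s ^ 2)).exp.const_mul α).const_sub
    1).log (sub_ne_zero.2 (gaussianProfile_lt_one (s := s) hα ‖x - μ‖).ne')
  convert hasGradientAt_comp_norm_sub_sq hd using 2
  · rfl
  · rw [gaussianProfile, ← div_div]
    ring

theorem integrable_gaussianProfile_sq_div_mul_norm [FiniteDimensional ℝ V] [MeasurableSpace V]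
    [BorelSpace V] (hα₀ : 0 ≤ α) (hα₁ : α < 1) (hs : s ≠ 0) :
    Integrable fun v : V =>
      gaussianProfile α s ‖v‖ ^ 2 / ((1 - gaussianProfile α s ‖v‖) * s ^ 2) * ‖v‖ := by
  refine ((integrable_exp_neg_mul_sq_norm_mul_norm (V := V) (b := (s ^ 2)⁻¹)
    (by positivity)).const_mul (α ^ 2 / ((1 - α) * s ^ 2))).mono'
    (by unfold gaussianProfile; fun_prop) (.of_forall fun v => ?_)
  have hG : gaussianProfile α s ‖v‖ ^ 2 = α ^ 2 * exp (-(s ^ 2)⁻¹ * ‖v‖ ^ 2) := by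
    rw [gaussianProfile, mul_pow, sq (exp _), ← exp_add]
    congr 2
    field_simp
    ring
  have h₀ : 0 < (1 - α) * s ^ 2 := by have := sub_pos.2 hα₁; positivity
  have h₁ : 0 < 1 - gaussianProfile α s ‖v‖ := sub_pos.2 (gaussianProfile_lt_one hα₁ _)
  have h₂ : 1 - α ≤ 1 - gaussianProfile α s ‖v‖ := by
    linarith [gaussianProfile_le (s := s) hα₀ ‖v‖]
  rw [norm_of_nonneg (by positivity), hG]
  calc α ^ 2 * exp (-(s ^ 2)⁻¹ * ‖v‖ ^ 2) / ((1 - gaussianProfile α s ‖v‖) * s ^ 2) * ‖v‖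
      ≤ α ^ 2 * exp (-(s ^ 2)⁻¹ * ‖v‖ ^ 2) / ((1 - α) * s ^ 2) * ‖v‖ := by gcongr
    _ = _ := by ring

end GaussianProfile

theorem stmt19 (α s : ℝ) (hα : α ∈ Set.Ioo (0 : ℝ) 1) (hs : 0 < s)
    (μ n : EuclideanSpace ℝ (Fin 3)) (hn : ‖n‖ = 1)
    (G : EuclideanSpace ℝ (Fin 3) → ℝ)
    (hG : ∀ x, G x = α * Real.exp (-‖x - μ‖ ^ 2 / (2 * s ^ 2)))
    (W : EuclideanSpace ℝ (Fin 3) → EuclideanSpace ℝ (Fin 3))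
    (hW : ∀ x, W x = (if 0 ≤ ⟪n, x - μ⟫ then (1 : ℝ) else 0) •
      gradient (fun y => Real.log (1 - G y)) x) :
    ∃ c : ℝ, c ≠ 0 ∧ (∫ x, G x • W x) = c • n := by
  obtain rfl : G = fun x => gaussianProfile α s ‖x - μ‖ := funext hG
  set r : ℝ → ℝ := fun t => gaussianProfile α s t ^ 2 / ((1 - gaussianProfile α s t) * s ^ 2)
  have hGW : ∀ x, gaussianProfile α s ‖x - μ‖ • W x = halfSpaceField μ n r x := fun x => by
    rw [hW, (hasGradientAt_log_one_sub_gaussianProfile hα.2 μ x).gradient, halfSpaceField]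
    split_ifs <;> simp only [r, smul_smul] <;> congr 1 <;> ring
  have hr_pos : ∀ t, 0 < r t := fun t =>
    div_pos (pow_pos (gaussianProfile_pos hα.1 t) 2)
      (mul_pos (sub_pos.2 (gaussianProfile_lt_one hα.2 t)) (pow_pos hs 2))
  obtain ⟨c, hc, hint⟩ := halfSpaceField.exists_pos_smul_eq_integral (μ := μ)
    (ne_zero_of_norm_ne_zero (hn ▸ one_ne_zero)) (by unfold r gaussianProfile; fun_prop) hr_pos
    (integrable_gaussianProfile_sq_div_mul_norm hα.1.le hα.2 hs.ne')
  exact ⟨c, hc.ne', by simp_rw [hGW]; exact hint⟩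

end
end
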